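/- arXiv:1812.07850 — 7 statements merged into one kernel-verified Lean document; each statement's English description precedes it below -/
import Mathlib

section
/- If φ and ψ are Marshall generators, then the function C^M_{φ,ψ} : [0,1]×[0,1] → [0,1] defined by C^M_{φ,ψ}(u,v) = min{φ(u)·v, ψ(v)·u} is a copula: it satisfies C^M_{φ,ψ}(u,0) = C^M_{φ,ψ}(0,v) = 0, C^M_{φ,ψ}(u,1) = u, C^M_{φ,ψ}(1,v) = v for all u,v ∈ [0,1], and C^M_{φ,ψ}(u₂,v₂) − C^M_{φ,ψ}(u₁,v₂) − C^M_{φ,ψ}(u₂,v₁) + C^M_{φ,ψ}(u₁,v₁) ≥ 0 whenever 0 ≤ u₁ ≤ u₂ ≤ 1 and 0 ≤ v₁ ≤ v₂ ≤ 1. -/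
/-!
Write `C(u, v) = min (φ u * v) (ψ v * u)`. For `u₁ ≤ u₂`, `v₁ ≤ v₂` the rectangle inequality
`C u₁ v₂ + C u₂ v₁ ≤ C u₂ v₂ + C u₁ v₁` splits, since `C u₂ v₂` is a minimum, into the two bounds
`C u₁ v₂ + C u₂ v₁ - C u₁ v₁ ≤ φ u₂ * v₂` and `… ≤ ψ v₂ * u₂`, which are mirror images of each other.
For the first, `C u₁ v₁` is again a minimum: against `φ u₁ * v₁` it follows from the monotonicity
of `φ`, against `ψ v₁ * u₁` from `ψ v₂ / v₂ ≤ ψ v₁ / v₁`. The boundary values need `u ≤ φ u`,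
which is the ratio condition at `u' = 1`.
-/

open Set

theorem min_mul_le_of_mul_le_mul {a b₁ b₂ u v₁ v₂ : ℝ} (hu : 0 ≤ u) (hb₁ : 0 ≤ b₁)
    (hv₁ : 0 ≤ v₁) (hv : v₁ ≤ v₂) (hb : b₂ * v₁ ≤ b₁ * v₂) :
    min (a * v₂) (b₂ * u) ≤ a * (v₂ - v₁) + b₁ * u := by
  rcases (hv₁.trans hv).eq_or_lt with rfl | hv₂
  · obtain rfl : v₁ = 0 := le_antisymm hv hv₁
    simp only [mul_zero, sub_self, zero_add]
    exact (min_le_left _ _).trans (mul_nonneg hb₁ hu)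
  · refine le_of_mul_le_mul_left ?_ hv₂
    -- `min` lies below the convex combination with weights `(v₂ - v₁) / v₂` and `v₁ / v₂`
    have hconv : v₂ * min (a * v₂) (b₂ * u) ≤ (v₂ - v₁) * (a * v₂) + v₁ * (b₂ * u) := by
      nlinarith [min_le_left (a * v₂) (b₂ * u), min_le_right (a * v₂) (b₂ * u)]
    nlinarith [mul_le_mul_of_nonneg_right hb hu]

def marshallCopula (φ ψ : ℝ → ℝ) (u v : ℝ) : ℝ := min (φ u * v) (ψ v * u)

namespace marshallCopula

variable {φ ψ : ℝ → ℝ} {u v u₁ u₂ v₁ v₂ : ℝ}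

theorem swap (φ ψ : ℝ → ℝ) (u v : ℝ) : marshallCopula φ ψ u v = marshallCopula ψ φ v u :=
  min_comm _ _

theorem zero_right (hψ0 : ψ 0 = 0) : marshallCopula φ ψ u 0 = 0 := by
  simp [marshallCopula, hψ0]

theorem zero_left (hφ0 : φ 0 = 0) : marshallCopula φ ψ 0 v = 0 := by
  rw [swap, zero_right hφ0]

theorem one_right (hψ1 : ψ 1 = 1) (hu : u ≤ φ u) : marshallCopula φ ψ u 1 = u := by
  simpa [marshallCopula, hψ1] using hu

theorem one_left (hφ1 : φ 1 = 1) (hv : v ≤ ψ v) : marshallCopula φ ψ 1 v = v := by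
  rw [swap, one_right hφ1 hv]

theorem mem_Icc (hφ : φ u ∈ Icc 0 1) (hψ : 0 ≤ ψ v) (hu : 0 ≤ u) (hv : v ∈ Icc 0 1) :
    marshallCopula φ ψ u v ∈ Icc 0 1 :=
  ⟨le_min (mul_nonneg hφ.1 hv.1) (mul_nonneg hψ hu),
    (min_le_left _ _).trans (mul_le_one₀ hφ.2 hv.1 hv.2)⟩

theorem add_sub_le_mul (hu₁ : 0 ≤ u₁) (hv₁ : 0 ≤ v₁) (hv : v₁ ≤ v₂)
    (hφ : φ u₁ ≤ φ u₂) (hψ₁ : 0 ≤ ψ v₁) (hψ : ψ v₂ * v₁ ≤ ψ v₁ * v₂) :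
    marshallCopula φ ψ u₁ v₂ + marshallCopula φ ψ u₂ v₁ - marshallCopula φ ψ u₁ v₁ ≤
      φ u₂ * v₂ := by
  have hC₂₁ : marshallCopula φ ψ u₂ v₁ ≤ φ u₂ * v₁ := min_le_left _ _
  suffices marshallCopula φ ψ u₁ v₂ + φ u₂ * v₁ - φ u₂ * v₂ ≤ marshallCopula φ ψ u₁ v₁ by
    linarith
  refine le_min ?_ ?_
  · have hC₁₂ : marshallCopula φ ψ u₁ v₂ ≤ φ u₁ * v₂ := min_le_left _ _
    nlinarith [mul_le_mul_of_nonneg_right hφ (sub_nonneg.2 hv)]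
  · have hC₁₂ : marshallCopula φ ψ u₁ v₂ ≤ φ u₁ * (v₂ - v₁) + ψ v₁ * u₁ :=
      min_mul_le_of_mul_le_mul hu₁ hψ₁ hv₁ hv hψ
    nlinarith [mul_le_mul_of_nonneg_right hφ (sub_nonneg.2 hv)]

theorem rect_nonneg (hu₁ : 0 ≤ u₁) (hu : u₁ ≤ u₂) (hv₁ : 0 ≤ v₁) (hv : v₁ ≤ v₂)
    (hφ : φ u₁ ≤ φ u₂) (hψ : ψ v₁ ≤ ψ v₂) (hφ₁ : 0 ≤ φ u₁) (hψ₁ : 0 ≤ ψ v₁)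
    (hφratio : φ u₂ * u₁ ≤ φ u₁ * u₂) (hψratio : ψ v₂ * v₁ ≤ ψ v₁ * v₂) :
    0 ≤ marshallCopula φ ψ u₂ v₂ - marshallCopula φ ψ u₁ v₂ - marshallCopula φ ψ u₂ v₁ +
      marshallCopula φ ψ u₁ v₁ := by
  have hφside := add_sub_le_mul hu₁ hv₁ hv hφ hψ₁ hψratio
  have hψside := add_sub_le_mul (φ := ψ) (ψ := φ) hv₁ hu₁ hu hψ hφ₁ hφratio
  simp only [← swap φ ψ] at hψside
  have hC₂₂ : _ ≤ marshallCopula φ ψ u₂ v₂ := le_min hφside (by linarith)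
  linarith

end marshallCopula

theorem marshall_copula_is_copula_general
    (φ ψ : ℝ → ℝ)
    (hφmono : MonotoneOn φ (Set.Icc 0 1))
    (hψmono : MonotoneOn ψ (Set.Icc 0 1))
    (hφ0 : φ 0 = 0) (hφ1 : φ 1 = 1)
    (hψ0 : ψ 0 = 0) (hψ1 : ψ 1 = 1)
    (hφratio : ∀ u u' : ℝ, 0 ≤ u → u ≤ u' → u' ≤ 1 → φ u' * u ≤ φ u * u')
    (hψratio : ∀ v v' : ℝ, 0 ≤ v → v ≤ v' → v' ≤ 1 → ψ v' * v ≤ ψ v * v')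
    (C : ℝ → ℝ → ℝ)
    (hC : ∀ u v : ℝ, C u v = min (φ u * v) (ψ v * u)) :
    (∀ u ∈ Set.Icc (0:ℝ) 1, ∀ v ∈ Set.Icc (0:ℝ) 1, C u v ∈ Set.Icc (0:ℝ) 1) ∧
    (∀ u ∈ Set.Icc (0:ℝ) 1, C u 0 = 0) ∧
    (∀ v ∈ Set.Icc (0:ℝ) 1, C 0 v = 0) ∧
    (∀ u ∈ Set.Icc (0:ℝ) 1, C u 1 = u) ∧
    (∀ v ∈ Set.Icc (0:ℝ) 1, C 1 v = v) ∧
    (∀ u₁ u₂ v₁ v₂ : ℝ, 0 ≤ u₁ → u₁ ≤ u₂ → u₂ ≤ 1 → 0 ≤ v₁ → v₁ ≤ v₂ → v₂ ≤ 1 →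
      0 ≤ C u₂ v₂ - C u₁ v₂ - C u₂ v₁ + C u₁ v₁) := by
  obtain rfl : C = marshallCopula φ ψ := funext fun u => funext (hC u)
  have hφI : MapsTo φ (Icc 0 1) (Icc 0 1) := by simpa [hφ0, hφ1] using hφmono.mapsTo_Icc
  have hψI : MapsTo ψ (Icc 0 1) (Icc 0 1) := by simpa [hψ0, hψ1] using hψmono.mapsTo_Icc
  have hφid : ∀ u ∈ Icc (0:ℝ) 1, u ≤ φ u := fun u hu => by
    simpa [hφ1] using hφratio u 1 hu.1 hu.2 le_rfl
  have hψid : ∀ v ∈ Icc (0:ℝ) 1, v ≤ ψ v := fun v hv => by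
    simpa [hψ1] using hψratio v 1 hv.1 hv.2 le_rfl
  refine ⟨fun u hu v hv => marshallCopula.mem_Icc (hφI hu) (hψI hv).1 hu.1 hv,
    fun u _ => marshallCopula.zero_right hψ0, fun v _ => marshallCopula.zero_left hφ0,
    fun u hu => marshallCopula.one_right hψ1 (hφid u hu),
    fun v hv => marshallCopula.one_left hφ1 (hψid v hv), ?_⟩
  intro u₁ u₂ v₁ v₂ hu₁ hu hu₂ hv₁ hv hv₂
  have hu₁I : u₁ ∈ Icc (0:ℝ) 1 := ⟨hu₁, hu.trans hu₂⟩
  have hu₂I : u₂ ∈ Icc (0:ℝ) 1 := ⟨hu₁.trans hu, hu₂⟩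
  have hv₁I : v₁ ∈ Icc (0:ℝ) 1 := ⟨hv₁, hv.trans hv₂⟩
  have hv₂I : v₂ ∈ Icc (0:ℝ) 1 := ⟨hv₁.trans hv, hv₂⟩
  exact marshallCopula.rect_nonneg hu₁ hu hv₁ hv (hφmono hu₁I hu₂I hu) (hψmono hv₁I hv₂I hv)
    (hφI hu₁I).1 (hψI hv₁I).1 (hφratio u₁ u₂ hu₁ hu hu₂) (hψratio v₁ v₂ hv₁ hv hv₂)

/-- The Marshall copula `C^M_{φ,ψ}(u,v) = min (φ u * v) (ψ v * u)` of two
Marshall generators is a copula. -/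
theorem marshall_copula_is_copula
    (φ ψ : ℝ → ℝ)
    (hφmono : MonotoneOn φ (Set.Icc 0 1))
    (hψmono : MonotoneOn ψ (Set.Icc 0 1))
    (hφ01 : ∀ u ∈ Set.Icc (0:ℝ) 1, φ u ∈ Set.Icc (0:ℝ) 1)
    (hψ01 : ∀ v ∈ Set.Icc (0:ℝ) 1, ψ v ∈ Set.Icc (0:ℝ) 1)
    (hφ0 : φ 0 = 0) (hφ1 : φ 1 = 1)
    (hψ0 : ψ 0 = 0) (hψ1 : ψ 1 = 1)
    (hφratio : ∀ u u' : ℝ, 0 ≤ u → u ≤ u' → u' ≤ 1 → φ u' * u ≤ φ u * u')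
    (hψratio : ∀ v v' : ℝ, 0 ≤ v → v ≤ v' → v' ≤ 1 → ψ v' * v ≤ ψ v * v')
    (C : ℝ → ℝ → ℝ)
    (hC : ∀ u v : ℝ, C u v = min (φ u * v) (ψ v * u)) :
    (∀ u ∈ Set.Icc (0:ℝ) 1, ∀ v ∈ Set.Icc (0:ℝ) 1, C u v ∈ Set.Icc (0:ℝ) 1) ∧
    (∀ u ∈ Set.Icc (0:ℝ) 1, C u 0 = 0) ∧
    (∀ v ∈ Set.Icc (0:ℝ) 1, C 0 v = 0) ∧
    (∀ u ∈ Set.Icc (0:ℝ) 1, C u 1 = u) ∧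
    (∀ v ∈ Set.Icc (0:ℝ) 1, C 1 v = v) ∧
    (∀ u₁ u₂ v₁ v₂ : ℝ, 0 ≤ u₁ → u₁ ≤ u₂ → u₂ ≤ 1 → 0 ≤ v₁ → v₁ ≤ v₂ → v₂ ≤ 1 →
      0 ≤ C u₂ v₂ - C u₁ v₂ - C u₂ v₁ + C u₁ v₁) :=
  marshall_copula_is_copula_general φ ψ hφmono hψmono hφ0 hφ1 hψ0 hψ1 hφratio hψratio C hC
end

section
/- If φ is a Marshall generator and χ is a maxmin second generator, then the function C^MM_{φ,χ} : [0,1]×[0,1] → [0,1] defined by C^MM_{φ,χ}(u,w) = uw + min{u(1−w), (φ(u)−u)(w−χ(w))} is a copula: it satisfies C^MM_{φ,χ}(u,0) = C^MM_{φ,χ}(0,w) = 0, C^MM_{φ,χ}(u,1) = u, C^MM_{φ,χ}(1,w) = w for all u,w ∈ [0,1], and C^MM_{φ,χ}(u₂,w₂) − C^MM_{φ,χ}(u₁,w₂) − C^MM_{φ,χ}(u₂,w₁) + C^MM_{φ,χ}(u₁,w₁) ≥ 0 whenever 0 ≤ u₁ ≤ u₂ ≤ 1 and 0 ≤ w₁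 ≤ w₂ ≤ 1. -/
/-!
With `a u = φ u - u ≥ 0` and `b w = w - χ w ≥ 0` the copula reads
`C u w = u - (u (1 - w) - a u * b w)⁺`. Putting `x = u`, `y = 1 - w` (so `y` grows as `w` falls),
the rectangle inequality becomes supermodularity of `(xᵢ yⱼ - aᵢ cⱼ)⁺` in `(i, j)`, and the two
generators enter only through the same two-point conditions on `(x, a)` and on `(y, c)`:
`x` and `x + a` nondecreasing, `a / x` nonincreasing.

If `x₁ yⱼ - a₁ cⱼ > 0` it is at most `x₂ yⱼ - a₂ cⱼ` (ratio condition), which settles every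
case except that of two positive off-diagonal entries. There, if the corner `(1, 1)` is positive
as well, one needs `(a₂ - a₁)(c₂ - c₁) ≤ (x₂ - x₁)(y₂ - y₁)`, which comes from the monotonicity
of `x + a`, `y + c` or from the ratio conditions according to the signs of the increments;
if the corner is nonpositive, an explicit nonnegative certificate does the job.
-/

open Set

namespace MaxminCopula

/-- Two points of a Marshall generator give `(u₁, u₂, φ u₁ - u₁, φ u₂ - u₂)`; two points
`w₁ ≤ w₂` of a maxmin second generator give `(1 - w₂, 1 - w₁, w₂ - χ w₂, w₁ - χ w₁)`. -/
structure IsGeneratorPair (x₁ x₂ a₁ a₂ : ℝ) : Prop where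
  x_nonneg : 0 ≤ x₁
  x_le : x₁ ≤ x₂
  a₁_nonneg : 0 ≤ a₁
  a₂_nonneg : 0 ≤ a₂
  ratio : a₂ * x₁ ≤ a₁ * x₂
  add_mono : a₁ + x₁ ≤ a₂ + x₂

def cross (x a y c : ℝ) : ℝ := x * y - a * c

lemma cross_comm (x a y c : ℝ) : cross x a y c = cross y c x a := by
  unfold cross; ring

namespace IsGeneratorPair

variable {x₁ x₂ a₁ a₂ y₁ y₂ c₁ c₂ y c : ℝ}

lemma pos_of_cross_pos (hx : IsGeneratorPair x₁ x₂ a₁ a₂) (hc : 0 ≤ c)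
    (h : 0 < cross x₁ a₁ y c) : 0 < x₁ := by
  refine hx.x_nonneg.lt_of_ne ?_
  rintro rfl
  unfold cross at h
  nlinarith [mul_nonneg hx.a₁_nonneg hc]

lemma cross_le_cross_of_pos (hx : IsGeneratorPair x₁ x₂ a₁ a₂) (hc : 0 ≤ c)
    (h : 0 < cross x₁ a₁ y c) : cross x₁ a₁ y c ≤ cross x₂ a₂ y c := by
  refine le_of_mul_le_mul_left ?_ (hx.pos_of_cross_pos hc h)
  calc x₁ * cross x₁ a₁ y c ≤ x₂ * cross x₁ a₁ y c := mul_le_mul_of_nonneg_right hx.x_le h.le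
    _ ≤ x₁ * cross x₂ a₂ y c := by
      unfold cross; nlinarith [mul_le_mul_of_nonneg_right hx.ratio hc]

lemma sub_mul_sub_le (hx : IsGeneratorPair x₁ x₂ a₁ a₂) (hy : IsGeneratorPair y₁ y₂ c₁ c₂)
    (h : 0 < cross x₁ a₁ y₁ c₁) : (a₂ - a₁) * (c₂ - c₁) ≤ (x₂ - x₁) * (y₂ - y₁) := by
  have hdx : 0 ≤ x₂ - x₁ := sub_nonneg.2 hx.x_le
  have hdy : 0 ≤ y₂ - y₁ := sub_nonneg.2 hy.x_le
  rcases le_total a₁ a₂ with ha | ha <;> rcases le_total c₁ c₂ with hc | hc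
  · have hx₁ : 0 < x₁ := hx.pos_of_cross_pos hy.a₁_nonneg h
    have hy₁ : 0 < y₁ := hy.pos_of_cross_pos hx.a₁_nonneg (cross_comm x₁ .. ▸ h)
    refine le_of_mul_le_mul_left ?_ (mul_pos hx₁ hy₁)
    calc x₁ * y₁ * ((a₂ - a₁) * (c₂ - c₁)) = ((a₂ - a₁) * x₁) * ((c₂ - c₁) * y₁) := by ring
      _ ≤ (a₁ * (x₂ - x₁)) * (c₁ * (y₂ - y₁)) :=
        mul_le_mul (by linarith [hx.ratio]) (by linarith [hy.ratio])
          (mul_nonneg (sub_nonneg.2 hc) hy.x_nonneg) (mul_nonneg hx.a₁_nonneg hdx)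
      _ = a₁ * c₁ * ((x₂ - x₁) * (y₂ - y₁)) := by ring
      _ ≤ x₁ * y₁ * ((x₂ - x₁) * (y₂ - y₁)) := by
        unfold cross at h
        exact mul_le_mul_of_nonneg_right (by linarith) (mul_nonneg hdx hdy)
  · nlinarith
  · nlinarith
  · calc (a₂ - a₁) * (c₂ - c₁) = (a₁ - a₂) * (c₁ - c₂) := by ring
      _ ≤ (x₂ - x₁) * (y₂ - y₁) :=
        mul_le_mul (by linarith [hx.add_mono]) (by linarith [hy.add_mono])
          (sub_nonneg.2 hc) hdx

lemma cross_add_cross_le_of_pos (hx : IsGeneratorPair x₁ x₂ a₁ a₂)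
    (hy : IsGeneratorPair y₁ y₂ c₁ c₂) (h₁₁ : 0 < cross x₁ a₁ y₁ c₁) :
    cross x₁ a₁ y₂ c₂ + cross x₂ a₂ y₁ c₁ ≤ cross x₁ a₁ y₁ c₁ + cross x₂ a₂ y₂ c₂ := by
  have := hx.sub_mul_sub_le hy h₁₁
  unfold cross
  linarith

lemma cross_add_cross_le_of_nonpos (hx : IsGeneratorPair x₁ x₂ a₁ a₂)
    (hy : IsGeneratorPair y₁ y₂ c₁ c₂) (h₁₁ : cross x₁ a₁ y₁ c₁ ≤ 0)
    (h₁₂ : 0 < cross x₁ a₁ y₂ c₂) (h₂₁ : 0 < cross x₂ a₂ y₁ c₁) :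
    cross x₁ a₁ y₂ c₂ + cross x₂ a₂ y₁ c₁ ≤ cross x₂ a₂ y₂ c₂ := by
  have hx₁ : 0 < x₁ := hx.pos_of_cross_pos hy.a₂_nonneg h₁₂
  have hy₁ : 0 < y₁ := hy.pos_of_cross_pos hx.a₂_nonneg (cross_comm x₂ .. ▸ h₂₁)
  have certificate : x₁ * (y₁ + c₁) *
      (cross x₂ a₂ y₂ c₂ - cross x₁ a₁ y₂ c₂ - cross x₂ a₂ y₁ c₁) =
      -cross x₁ a₁ y₁ c₁ * (x₁ * (y₂ + c₂))
      + ((a₂ + x₂) - (a₁ + x₁)) * (-cross x₁ a₁ y₁ c₁ * c₂ + cross x₁ a₁ y₂ c₂ * c₁)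
      + ((c₂ + y₂) - (c₁ + y₁)) * (cross x₂ a₂ y₁ c₁ * x₁) := by
    unfold cross; ring
  have hsum : 0 ≤ x₁ * (y₁ + c₁) *
      (cross x₂ a₂ y₂ c₂ - cross x₁ a₁ y₂ c₂ - cross x₂ a₂ y₁ c₁) := by
    have hE₁₁ : 0 ≤ -cross x₁ a₁ y₁ c₁ := neg_nonneg.2 h₁₁
    have hdx : 0 ≤ (a₂ + x₂) - (a₁ + x₁) := sub_nonneg.2 hx.add_mono
    have hdy : 0 ≤ (c₂ + y₂) - (c₁ + y₁) := sub_nonneg.2 hy.add_mono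
    have hy₂ : 0 ≤ y₂ + c₂ := add_nonneg (hy₁.le.trans hy.x_le) hy.a₂_nonneg
    rw [certificate]
    exact add_nonneg (add_nonneg (mul_nonneg hE₁₁ (mul_nonneg hx₁.le hy₂))
      (mul_nonneg hdx (add_nonneg (mul_nonneg hE₁₁ hy.a₂_nonneg)
        (mul_nonneg h₁₂.le hy.a₁_nonneg))))
      (mul_nonneg hdy (mul_nonneg h₂₁.le hx₁.le))
  have := nonneg_of_mul_nonneg_right hsum
    (mul_pos hx₁ (add_pos_of_pos_of_nonneg hy₁ hy.a₁_nonneg))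
  linarith

theorem posPart_cross_add_le (hx : IsGeneratorPair x₁ x₂ a₁ a₂)
    (hy : IsGeneratorPair y₁ y₂ c₁ c₂) :
    (cross x₁ a₁ y₂ c₂)⁺ + (cross x₂ a₂ y₁ c₁)⁺ ≤ (cross x₁ a₁ y₁ c₁)⁺ + (cross x₂ a₂ y₂ c₂)⁺ := by
  have le₁₂ := hx.cross_le_cross_of_pos (y := y₂) hy.a₂_nonneg
  have le₂₁ : 0 < cross x₂ a₂ y₁ c₁ → cross x₂ a₂ y₁ c₁ ≤ cross x₂ a₂ y₂ c₂ := by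
    simpa only [cross_comm x₂] using hy.cross_le_cross_of_pos (y := x₂) hx.a₂_nonneg
  have hE₁₁ := posPart_nonneg (cross x₁ a₁ y₁ c₁)
  have hE₂₂ := le_posPart (cross x₂ a₂ y₂ c₂)
  rcases le_or_gt (cross x₁ a₁ y₂ c₂) 0 with n₁₂ | p₁₂ <;>
    rcases le_or_gt (cross x₂ a₂ y₁ c₁) 0 with n₂₁ | p₂₁
  · rw [posPart_eq_zero.2 n₁₂, posPart_eq_zero.2 n₂₁]
    linarith [posPart_nonneg (cross x₂ a₂ y₂ c₂)]
  · rw [posPart_eq_zero.2 n₁₂, posPart_eq_self.2 p₂₁.le]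
    linarith [le₂₁ p₂₁]
  · rw [posPart_eq_self.2 p₁₂.le, posPart_eq_zero.2 n₂₁]
    linarith [le₁₂ p₁₂]
  · rw [posPart_eq_self.2 p₁₂.le, posPart_eq_self.2 p₂₁.le,
      posPart_eq_self.2 (p₁₂.le.trans (le₁₂ p₁₂))]
    rcases le_or_gt (cross x₁ a₁ y₁ c₁) 0 with n₁₁ | p₁₁
    · rw [posPart_eq_zero.2 n₁₁, zero_add]
      exact hx.cross_add_cross_le_of_nonpos hy n₁₁ p₁₂ p₂₁
    · rw [posPart_eq_self.2 p₁₁.le]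
      exact hx.cross_add_cross_le_of_pos hy p₁₁

end IsGeneratorPair

lemma self_le_of_marshall {φ : ℝ → ℝ} (h1 : φ 1 = 1)
    (hratio : ∀ u u' : ℝ, 0 ≤ u → u ≤ u' → u' ≤ 1 → φ u' * u ≤ φ u * u') {u : ℝ}
    (hu : u ∈ Icc 0 1) : u ≤ φ u := by
  simpa [h1] using hratio u 1 hu.1 hu.2 le_rfl

lemma isGeneratorPair_of_marshall {φ : ℝ → ℝ} (hmono : MonotoneOn φ (Icc 0 1)) (h1 : φ 1 = 1)
    (hratio : ∀ u u' : ℝ, 0 ≤ u → u ≤ u' → u' ≤ 1 → φ u' * u ≤ φ u * u') {u₁ u₂ : ℝ}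
    (h₀ : 0 ≤ u₁) (h₁₂ : u₁ ≤ u₂) (h₂ : u₂ ≤ 1) :
    IsGeneratorPair u₁ u₂ (φ u₁ - u₁) (φ u₂ - u₂) where
  x_nonneg := h₀
  x_le := h₁₂
  a₁_nonneg := sub_nonneg.2 (self_le_of_marshall h1 hratio ⟨h₀, h₁₂.trans h₂⟩)
  a₂_nonneg := sub_nonneg.2 (self_le_of_marshall h1 hratio ⟨h₀.trans h₁₂, h₂⟩)
  ratio := by linarith [hratio u₁ u₂ h₀ h₁₂ h₂]
  add_mono := by
    simpa using hmono ⟨h₀, h₁₂.trans h₂⟩ ⟨h₀.trans h₁₂, h₂⟩ h₁₂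

lemma isGeneratorPair_of_maxminSecond {χ : ℝ → ℝ} (hmono : MonotoneOn χ (Icc 0 1))
    (hle : ∀ w ∈ Icc (0 : ℝ) 1, χ w ≤ w)
    (hratio : ∀ w w' : ℝ, 0 ≤ w → w ≤ w' → w' ≤ 1 →
      (1 - χ w') * (w - χ w) ≤ (1 - χ w) * (w' - χ w'))
    {w₁ w₂ : ℝ} (h₀ : 0 ≤ w₁) (h₁₂ : w₁ ≤ w₂) (h₂ : w₂ ≤ 1) :
    IsGeneratorPair (1 - w₂) (1 - w₁) (w₂ - χ w₂) (w₁ - χ w₁) where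
  x_nonneg := sub_nonneg.2 h₂
  x_le := by linarith
  a₁_nonneg := sub_nonneg.2 (hle w₂ ⟨h₀.trans h₁₂, h₂⟩)
  a₂_nonneg := sub_nonneg.2 (hle w₁ ⟨h₀, h₁₂.trans h₂⟩)
  ratio := by linarith [hratio w₁ w₂ h₀ h₁₂ h₂]
  add_mono := by
    linarith [hmono ⟨h₀, h₁₂.trans h₂⟩ ⟨h₀.trans h₁₂, h₂⟩ h₁₂]

lemma mul_add_min_eq_sub_posPart (u w a b : ℝ) :
    u * w + min (u * (1 - w)) (a * b) = u - (cross u a (1 - w) b)⁺ := by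
  rw [inf_eq_sub_posPart_sub, cross]
  ring

lemma mul_add_min_mem_Icc {u w q : ℝ} (hu : u ∈ Icc 0 1) (hw : w ∈ Icc 0 1) (hq : 0 ≤ q) :
    u * w + min (u * (1 - w)) q ∈ Icc 0 1 := by
  have hmin : 0 ≤ min (u * (1 - w)) q := le_min (mul_nonneg hu.1 (by linarith [hw.2])) hq
  constructor
  · nlinarith [mul_nonneg hu.1 hw.1]
  · nlinarith [min_le_left (u * (1 - w)) q, hu.2]

end MaxminCopula

open MaxminCopula

theorem maxmin_copula_is_copula_general
    (φ χ : ℝ → ℝ)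
    (hφmono : MonotoneOn φ (Set.Icc 0 1))
    (hχmono : MonotoneOn χ (Set.Icc 0 1))
    (hφ1 : φ 1 = 1)
    (hχ0 : χ 0 = 0)
    (hχle : ∀ w ∈ Set.Icc (0:ℝ) 1, χ w ≤ w)
    (hφratio : ∀ u u' : ℝ, 0 ≤ u → u ≤ u' → u' ≤ 1 → φ u' * u ≤ φ u * u')
    (hχratio : ∀ w w' : ℝ, 0 ≤ w → w ≤ w' → w' ≤ 1 →
      (1 - χ w') * (w - χ w) ≤ (1 - χ w) * (w' - χ w'))
    (C : ℝ → ℝ → ℝ)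
    (hC : ∀ u w : ℝ, C u w = u * w + min (u * (1 - w)) ((φ u - u) * (w - χ w))) :
    (∀ u ∈ Set.Icc (0:ℝ) 1, ∀ w ∈ Set.Icc (0:ℝ) 1, C u w ∈ Set.Icc (0:ℝ) 1) ∧
    (∀ u ∈ Set.Icc (0:ℝ) 1, C u 0 = 0) ∧
    (∀ w ∈ Set.Icc (0:ℝ) 1, C 0 w = 0) ∧
    (∀ u ∈ Set.Icc (0:ℝ) 1, C u 1 = u) ∧
    (∀ w ∈ Set.Icc (0:ℝ) 1, C 1 w = w) ∧
    (∀ u₁ u₂ w₁ w₂ : ℝ, 0 ≤ u₁ → u₁ ≤ u₂ → u₂ ≤ 1 → 0 ≤ w₁ → w₁ ≤ w₂ → w₂ ≤ 1 →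
      0 ≤ C u₂ w₂ - C u₁ w₂ - C u₂ w₁ + C u₁ w₁) := by
  have hq : ∀ u ∈ Icc (0 : ℝ) 1, ∀ w ∈ Icc (0 : ℝ) 1, 0 ≤ (φ u - u) * (w - χ w) :=
    fun u hu w hw ↦ mul_nonneg (sub_nonneg.2 (self_le_of_marshall hφ1 hφratio hu))
      (sub_nonneg.2 (hχle w hw))
  refine ⟨fun u hu w hw ↦ hC u w ▸ mul_add_min_mem_Icc hu hw (hq u hu w hw), ?_, ?_, ?_, ?_, ?_⟩
  · intro u hu
    simp [hC, hχ0, hu.1]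
  · intro w hw
    simpa [hC] using hq 0 ⟨le_rfl, zero_le_one⟩ w hw
  · intro u hu
    simp [hC, hq u hu 1 ⟨zero_le_one, le_rfl⟩]
  · intro w hw
    simp [hC, hφ1, hw.2]
  · intro u₁ u₂ w₁ w₂ hu₁ hu hu₂ hw₁ hw hw₂
    have hx := isGeneratorPair_of_marshall hφmono hφ1 hφratio hu₁ hu hu₂
    have hy := isGeneratorPair_of_maxminSecond hχmono hχle hχratio hw₁ hw hw₂
    simp only [hC, mul_add_min_eq_sub_posPart]
    linarith [hx.posPart_cross_add_le hy]

/-- The maxmin copula `C^MM_{φ,χ}(u,w) = uw + min (u(1-w)) ((φ u - u)(w - χ w))`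
of a Marshall generator φ and a maxmin second generator χ is a copula. -/
theorem maxmin_copula_is_copula
    (φ χ : ℝ → ℝ)
    (hφmono : MonotoneOn φ (Set.Icc 0 1))
    (hχmono : MonotoneOn χ (Set.Icc 0 1))
    (hφ01 : ∀ u ∈ Set.Icc (0:ℝ) 1, φ u ∈ Set.Icc (0:ℝ) 1)
    (hχ01 : ∀ w ∈ Set.Icc (0:ℝ) 1, χ w ∈ Set.Icc (0:ℝ) 1)
    (hφ0 : φ 0 = 0) (hφ1 : φ 1 = 1)
    (hχ0 : χ 0 = 0) (hχ1 : χ 1 = 1)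
    (hχle : ∀ w ∈ Set.Icc (0:ℝ) 1, χ w ≤ w)
    (hφratio : ∀ u u' : ℝ, 0 ≤ u → u ≤ u' → u' ≤ 1 → φ u' * u ≤ φ u * u')
    (hχratio : ∀ w w' : ℝ, 0 ≤ w → w ≤ w' → w' ≤ 1 →
      (1 - χ w') * (w - χ w) ≤ (1 - χ w) * (w' - χ w'))
    (C : ℝ → ℝ → ℝ)
    (hC : ∀ u w : ℝ, C u w = u * w + min (u * (1 - w)) ((φ u - u) * (w - χ w))) :
    (∀ u ∈ Set.Icc (0:ℝ) 1, ∀ w ∈ Set.Icc (0:ℝ) 1, C u w ∈ Set.Icc (0:ℝ) 1) ∧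
    (∀ u ∈ Set.Icc (0:ℝ) 1, C u 0 = 0) ∧
    (∀ w ∈ Set.Icc (0:ℝ) 1, C 0 w = 0) ∧
    (∀ u ∈ Set.Icc (0:ℝ) 1, C u 1 = u) ∧
    (∀ w ∈ Set.Icc (0:ℝ) 1, C 1 w = w) ∧
    (∀ u₁ u₂ w₁ w₂ : ℝ, 0 ≤ u₁ → u₁ ≤ u₂ → u₂ ≤ 1 → 0 ≤ w₁ → w₁ ≤ w₂ → w₂ ≤ 1 →
      0 ≤ C u₂ w₂ - C u₁ w₂ - C u₂ w₁ + C u₁ w₁) :=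
  maxmin_copula_is_copula_general φ χ hφmono hχmono hφ1 hχ0 hχle hφratio hχratio C hC
end

section
/- Let F_Y, F_Z : ℝ → [0,1] be nondecreasing and set K = F_Y + F_Z − F_Y·F_Z. Let X be a nonempty set of functions χ : [0,1] → [0,1], each of which is nondecreasing, satisfies χ(0) = 0, χ(1) = 1, χ(w) ≤ w for all w, (1−χ(w))·(w'−χ(w')) ≥ (1−χ(w'))·(w−χ(w)) whenever 0 ≤ w ≤ w' ≤ 1, and χ(K(y)) = F_Y(y) for every y with K(y) < 1. Then the pointwise infimum χ_min(w) = inf{χ(w) : χ ∈ X} and the pointwise supremum χ_max(w) = sup{χ(w) : χ ∈ X} both satisfy all of these properties. -/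
/-!
Every defining property of an associated function is a condition on finitely many of its values
that cuts out a closed set, and the pointwise infimum (supremum) of a family lies in the closure
of the family's values. The ratio condition looks quadratic, but after expansion the product
`χ w * χ w'` cancels: it says `χ w' * (1 - w) ≤ χ w * (1 - w') + (w' - w)`, which is monotone in
`χ w`, antitone in `χ w'` and linear in each, so it passes to infima and suprema one variable at
a time.
-/

/-- A generating function χ associated to the pair (F_Y, F_Z): nondecreasing on [0,1],
mapping [0,1] into [0,1], with χ(0)=0, χ(1)=1, χ(w) ≤ w, (1-χ(w))/(w-χ(w)) nonincreasing
(in product form), and χ(K(y)) = F_Y(y) whenever K(y) := F_Y(y)+F_Z(y)-F_Y(y)·F_Z(y) < 1. -/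
def IsAssociatedMaxmin (FY FZ : ℝ → ℝ) (χ : ℝ → ℝ) : Prop :=
  MonotoneOn χ (Set.Icc 0 1) ∧
  (∀ w ∈ Set.Icc (0:ℝ) 1, χ w ∈ Set.Icc (0:ℝ) 1) ∧
  χ 0 = 0 ∧ χ 1 = 1 ∧
  (∀ w ∈ Set.Icc (0:ℝ) 1, χ w ≤ w) ∧
  (∀ w w' : ℝ, 0 ≤ w → w ≤ w' → w' ≤ 1 →
    (1 - χ w') * (w - χ w) ≤ (1 - χ w) * (w' - χ w')) ∧
  (∀ y : ℝ, FY y + FZ y - FY y * FZ y < 1 → χ (FY y + FZ y - FY y * FZ y) = FY y)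

open Set

theorem ratio_condition_iff (w w' a b : ℝ) :
    (1 - b) * (w - a) ≤ (1 - a) * (w' - b) ↔ b * (1 - w) ≤ a * (1 - w') + (w' - w) := by
  constructor <;> intro h <;> linarith

section ClosedSet

variable {α ι : Type*} [ConditionallyCompleteLinearOrder α] [TopologicalSpace α] [OrderTopology α]
  {X : Set ι} {f : ι → α} {C : Set α}

theorem sInf_image_mem_of_isClosed (hC : IsClosed C) (hX : X.Nonempty) (hb : BddBelow (f '' X))
    (hf : ∀ i ∈ X, f i ∈ C) : sInf (f '' X) ∈ C :=
  hC.closure_subset_iff.2 (image_subset_iff.2 hf) (csInf_mem_closure (hX.image f) hb)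

theorem sSup_image_mem_of_isClosed (hC : IsClosed C) (hX : X.Nonempty) (hb : BddAbove (f '' X))
    (hf : ∀ i ∈ X, f i ∈ C) : sSup (f '' X) ∈ C :=
  hC.closure_subset_iff.2 (image_subset_iff.2 hf) (csSup_mem_closure (hX.image f) hb)

end ClosedSet

namespace IsAssociatedMaxmin

variable {FY FZ χ : ℝ → ℝ}

theorem monotoneOn (h : IsAssociatedMaxmin FY FZ χ) : MonotoneOn χ (Icc 0 1) := h.1

theorem mem_Icc (h : IsAssociatedMaxmin FY FZ χ) {w : ℝ} (hw : w ∈ Icc (0 : ℝ) 1) :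
    χ w ∈ Icc (0 : ℝ) 1 :=
  h.2.1 w hw

theorem map_zero (h : IsAssociatedMaxmin FY FZ χ) : χ 0 = 0 := h.2.2.1

theorem map_one (h : IsAssociatedMaxmin FY FZ χ) : χ 1 = 1 := h.2.2.2.1

theorem le_self (h : IsAssociatedMaxmin FY FZ χ) {w : ℝ} (hw : w ∈ Icc (0 : ℝ) 1) : χ w ≤ w :=
  h.2.2.2.2.1 w hw

theorem linear_ratio (h : IsAssociatedMaxmin FY FZ χ) {w w' : ℝ} (hw : 0 ≤ w) (hww' : w ≤ w')
    (hw' : w' ≤ 1) : χ w' * (1 - w) ≤ χ w * (1 - w') + (w' - w) :=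
  (ratio_condition_iff _ _ _ _).1 (h.2.2.2.2.2.1 w w' hw hww' hw')

theorem map_K (h : IsAssociatedMaxmin FY FZ χ) {y : ℝ} (hy : FY y + FZ y - FY y * FZ y < 1) :
    χ (FY y + FZ y - FY y * FZ y) = FY y :=
  h.2.2.2.2.2.2 y hy

variable {X : Set (ℝ → ℝ)}

theorem sInf_eval (hne : X.Nonempty) (hX : ∀ χ ∈ X, IsAssociatedMaxmin FY FZ χ) :
    IsAssociatedMaxmin FY FZ (fun w => sInf ((fun χ : ℝ → ℝ => χ w) '' X)) := by
  set m : ℝ → ℝ := fun w => sInf ((fun χ : ℝ → ℝ => χ w) '' X)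
  have hbdd {w : ℝ} (hw : w ∈ Icc (0 : ℝ) 1) : BddBelow ((fun χ : ℝ → ℝ => χ w) '' X) :=
    ⟨0, by rintro _ ⟨χ, hχ, rfl⟩; exact ((hX χ hχ).mem_Icc hw).1⟩
  have hle {w : ℝ} (hw : w ∈ Icc (0 : ℝ) 1) {χ} (hχ : χ ∈ X) : m w ≤ χ w :=
    csInf_le (hbdd hw) ⟨χ, hχ, rfl⟩
  have hconst {w c : ℝ} (h : ∀ χ ∈ X, χ w = c) : m w = c := by
    simp only [m, (image_congr h).trans (hne.image_const c), csInf_singleton]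
  refine ⟨fun w hw w' hw' hww' => ?_, fun w hw => ?_, hconst fun χ hχ => (hX χ hχ).map_zero,
    hconst fun χ hχ => (hX χ hχ).map_one, fun w hw => ?_, fun w w' hw hww' hw' => ?_,
    fun y hy => hconst fun χ hχ => (hX χ hχ).map_K hy⟩
  · exact sInf_image_mem_of_isClosed isClosed_Ici hne (hbdd hw')
      fun χ hχ => (hle hw hχ).trans ((hX χ hχ).monotoneOn hw hw' hww')
  · exact sInf_image_mem_of_isClosed isClosed_Icc hne (hbdd hw) fun χ hχ => (hX χ hχ).mem_Icc hw
  · exact sInf_image_mem_of_isClosed isClosed_Iic hne (hbdd hw) fun χ hχ => (hX χ hχ).le_self hw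
  · have hwI : w ∈ Icc (0 : ℝ) 1 := ⟨hw, hww'.trans hw'⟩
    have hw'I : w' ∈ Icc (0 : ℝ) 1 := ⟨hw.trans hww', hw'⟩
    rw [ratio_condition_iff]
    refine sInf_image_mem_of_isClosed (C := {a | m w' * (1 - w) ≤ a * (1 - w') + (w' - w)})
      (isClosed_le continuous_const (by fun_prop)) hne (hbdd hwI) fun χ hχ => ?_
    calc m w' * (1 - w) ≤ χ w' * (1 - w) :=
          mul_le_mul_of_nonneg_right (hle hw'I hχ) (by linarith)
      _ ≤ χ w * (1 - w') + (w' - w) := (hX χ hχ).linear_ratio hw hww' hw'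

theorem sSup_eval (hne : X.Nonempty) (hX : ∀ χ ∈ X, IsAssociatedMaxmin FY FZ χ) :
    IsAssociatedMaxmin FY FZ (fun w => sSup ((fun χ : ℝ → ℝ => χ w) '' X)) := by
  set M : ℝ → ℝ := fun w => sSup ((fun χ : ℝ → ℝ => χ w) '' X)
  have hbdd {w : ℝ} (hw : w ∈ Icc (0 : ℝ) 1) : BddAbove ((fun χ : ℝ → ℝ => χ w) '' X) :=
    ⟨1, by rintro _ ⟨χ, hχ, rfl⟩; exact ((hX χ hχ).mem_Icc hw).2⟩
  have hle {w : ℝ} (hw : w ∈ Icc (0 : ℝ) 1) {χ} (hχ : χ ∈ X) : χ w ≤ M w :=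
    le_csSup (hbdd hw) ⟨χ, hχ, rfl⟩
  have hconst {w c : ℝ} (h : ∀ χ ∈ X, χ w = c) : M w = c := by
    simp only [M, (image_congr h).trans (hne.image_const c), csSup_singleton]
  refine ⟨fun w hw w' hw' hww' => ?_, fun w hw => ?_, hconst fun χ hχ => (hX χ hχ).map_zero,
    hconst fun χ hχ => (hX χ hχ).map_one, fun w hw => ?_, fun w w' hw hww' hw' => ?_,
    fun y hy => hconst fun χ hχ => (hX χ hχ).map_K hy⟩
  · exact sSup_image_mem_of_isClosed (C := Iic (M w')) isClosed_Iic hne (hbdd hw)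
      fun χ hχ => ((hX χ hχ).monotoneOn hw hw' hww').trans (hle hw' hχ)
  · exact sSup_image_mem_of_isClosed isClosed_Icc hne (hbdd hw) fun χ hχ => (hX χ hχ).mem_Icc hw
  · exact sSup_image_mem_of_isClosed isClosed_Iic hne (hbdd hw) fun χ hχ => (hX χ hχ).le_self hw
  · have hwI : w ∈ Icc (0 : ℝ) 1 := ⟨hw, hww'.trans hw'⟩
    have hw'I : w' ∈ Icc (0 : ℝ) 1 := ⟨hw.trans hww', hw'⟩
    rw [ratio_condition_iff]
    refine sSup_image_mem_of_isClosed (C := {b | b * (1 - w) ≤ M w * (1 - w') + (w' - w)})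
      (isClosed_le (by fun_prop) continuous_const) hne (hbdd hw'I) fun χ hχ => ?_
    calc χ w' * (1 - w) ≤ χ w * (1 - w') + (w' - w) := (hX χ hχ).linear_ratio hw hww' hw'
      _ ≤ M w * (1 - w') + (w' - w) := by
          gcongr
          exact hle hwI hχ

end IsAssociatedMaxmin

theorem inf_sup_associated_maxmin_general
    (FY FZ : ℝ → ℝ)
    (X : Set (ℝ → ℝ)) (hne : X.Nonempty)
    (hX : ∀ χ ∈ X, IsAssociatedMaxmin FY FZ χ) :
    IsAssociatedMaxmin FY FZ (fun w => sInf ((fun χ : ℝ → ℝ => χ w) '' X)) ∧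
    IsAssociatedMaxmin FY FZ (fun w => sSup ((fun χ : ℝ → ℝ => χ w) '' X)) :=
  ⟨.sInf_eval hne hX, .sSup_eval hne hX⟩

/-- The pointwise infimum and supremum of a nonempty family of generating
functions associated to (F_Y, F_Z) are again associated to (F_Y, F_Z). -/
theorem inf_sup_associated_maxmin
    (FY FZ : ℝ → ℝ)
    (hFYmono : Monotone FY) (hFZmono : Monotone FZ)
    (hFY01 : ∀ y : ℝ, FY y ∈ Set.Icc (0:ℝ) 1)
    (hFZ01 : ∀ y : ℝ, FZ y ∈ Set.Icc (0:ℝ) 1)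
    (X : Set (ℝ → ℝ)) (hne : X.Nonempty)
    (hX : ∀ χ ∈ X, IsAssociatedMaxmin FY FZ χ) :
    IsAssociatedMaxmin FY FZ (fun w => sInf ((fun χ : ℝ → ℝ => χ w) '' X)) ∧
    IsAssociatedMaxmin FY FZ (fun w => sSup ((fun χ : ℝ → ℝ => χ w) '' X)) :=
  inf_sup_associated_maxmin_general FY FZ X hne hX
end

section
/- Let φ̲, φ̄ be Marshall generators with φ̲ ≤ φ̄ pointwise and χ̲, χ̄ be maxmin second generators with χ̲ ≤ χ̄ pointwise, and set C̲ = C^MM_{φ̲,χ̄} and C̄ = C^MM_{φ̄,χ̲}. Then the imprecise copula (C̲, C̄) is coherent: for every (u,w) ∈ [0,1]², the infimum of C(u,w) over all copulas C with C̲ ≤ C ≤ C̄ equals C̲(u,w), and the supremum of C(u,w) over all copulas C with C̲ ≤ C ≤ C̄ equals C̄(u,w). -/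
/-- A (bivariate) copula on [0,1]². -/
def IsCopula (C : ℝ → ℝ → ℝ) : Prop :=
  (∀ u ∈ Set.Icc (0:ℝ) 1, ∀ v ∈ Set.Icc (0:ℝ) 1, C u v ∈ Set.Icc (0:ℝ) 1) ∧
  (∀ u ∈ Set.Icc (0:ℝ) 1, C u 0 = 0) ∧
  (∀ v ∈ Set.Icc (0:ℝ) 1, C 0 v = 0) ∧
  (∀ u ∈ Set.Icc (0:ℝ) 1, C u 1 = u) ∧
  (∀ v ∈ Set.Icc (0:ℝ) 1, C 1 v = v) ∧
  (∀ u₁ u₂ v₁ v₂ : ℝ, 0 ≤ u₁ → u₁ ≤ u₂ → u₂ ≤ 1 → 0 ≤ v₁ → v₁ ≤ v₂ → v₂ ≤ 1 →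
    0 ≤ C u₂ v₂ - C u₁ v₂ - C u₂ v₁ + C u₁ v₁)

/-- A Marshall generator (first generator of a maxmin copula). -/
def IsMarshallGen (φ : ℝ → ℝ) : Prop :=
  MonotoneOn φ (Set.Icc 0 1) ∧
  (∀ u ∈ Set.Icc (0:ℝ) 1, φ u ∈ Set.Icc (0:ℝ) 1) ∧
  φ 0 = 0 ∧ φ 1 = 1 ∧
  (∀ u u' : ℝ, 0 ≤ u → u ≤ u' → u' ≤ 1 → φ u' * u ≤ φ u * u')

/-- A maxmin second generator. -/
def IsMaxminGen (χ : ℝ → ℝ) : Prop :=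
  MonotoneOn χ (Set.Icc 0 1) ∧
  (∀ w ∈ Set.Icc (0:ℝ) 1, χ w ∈ Set.Icc (0:ℝ) 1) ∧
  χ 0 = 0 ∧ χ 1 = 1 ∧
  (∀ w ∈ Set.Icc (0:ℝ) 1, χ w ≤ w) ∧
  (∀ w w' : ℝ, 0 ≤ w → w ≤ w' → w' ≤ 1 →
    (1 - χ w') * (w - χ w) ≤ (1 - χ w) * (w' - χ w'))

/-- The maxmin copula of generators φ, χ. -/
noncomputable def maxminCopula (φ χ : ℝ → ℝ) : ℝ → ℝ → ℝ :=
  fun u w => u * w + min (u * (1 - w)) ((φ u - u) * (w - χ w))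

/-! Write the maxmin copula as `C(u,w) = min(u, u w + p(u) k(w))` with `p = φ - id ≥ 0` and
`k = id - χ ≥ 0`. The Marshall condition says that `p(u)/u` is nonincreasing and the condition on
the second generator that `k(w)/(1-w)` is nondecreasing. From these, `C` is nondecreasing in `w` and
`1`-Lipschitz in `u`, which settles the rectangle inequality unless the minimum is the second term
at the corners `(u₁,w₁)` and `(u₂,w₂)`; there it reads `(p₂-p₁)(k₁-k₂) ≤ (u₂-u₁)(w₂-w₁)`, which
follows from both ratio conditions and `p₁k₁ < u₁(1-w₁)`. So both bounds are copulas, and since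
`C^MM` is monotone in the generators, `C̲ ≤ C̄`: each bound lies in the family it bounds, so the
infimum and supremum are attained. -/

open Set

lemma IsMarshallGen.self_le {φ : ℝ → ℝ} (hφ : IsMarshallGen φ) {u : ℝ} (hu : u ∈ Icc (0:ℝ) 1) :
    u ≤ φ u := by
  have h := hφ.2.2.2.2 u 1 hu.1 hu.2 le_rfl
  rw [hφ.2.2.2.1] at h
  linarith

lemma IsMarshallGen.sub_self_mul_le {φ : ℝ → ℝ} (hφ : IsMarshallGen φ) {u u' : ℝ}
    (hu : 0 ≤ u) (huu' : u ≤ u') (hu' : u' ≤ 1) :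
    (φ u' - u') * u ≤ (φ u - u) * u' := by
  linear_combination hφ.2.2.2.2 u u' hu huu' hu'

lemma IsMaxminGen.apply_le {χ : ℝ → ℝ} (hχ : IsMaxminGen χ) {w : ℝ} (hw : w ∈ Icc (0:ℝ) 1) :
    χ w ≤ w :=
  hχ.2.2.2.2.1 w hw

lemma IsMaxminGen.sub_mul_one_sub_le {χ : ℝ → ℝ} (hχ : IsMaxminGen χ) {w w' : ℝ}
    (hw : 0 ≤ w) (hww' : w ≤ w') (hw' : w' ≤ 1) :
    (w - χ w) * (1 - w') ≤ (w' - χ w') * (1 - w) := by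
  linear_combination hχ.2.2.2.2.2 w w' hw hww' hw'

lemma maxminCopula_eq_min (φ χ : ℝ → ℝ) (u w : ℝ) :
    maxminCopula φ χ u w = min u (u * w + (φ u - u) * (w - χ w)) := by
  rw [maxminCopula, ← min_add_add_left]
  congr 1
  ring

lemma maxminCopula_le_left (φ χ : ℝ → ℝ) (u w : ℝ) : maxminCopula φ χ u w ≤ u := by
  rw [maxminCopula_eq_min]
  exact min_le_left _ _

lemma maxminCopula_le_right (φ χ : ℝ → ℝ) (u w : ℝ) :
    maxminCopula φ χ u w ≤ u * w + (φ u - u) * (w - χ w) := by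
  rw [maxminCopula_eq_min]
  exact min_le_right _ _

lemma maxminCopula_mono_right {φ χ : ℝ → ℝ} (hφ : IsMarshallGen φ) (hχ : IsMaxminGen χ)
    {u w w' : ℝ} (hu : u ∈ Icc (0:ℝ) 1) (hw : 0 ≤ w) (hww' : w ≤ w') (hw' : w' ≤ 1) :
    maxminCopula φ χ u w ≤ maxminCopula φ χ u w' := by
  simp only [maxminCopula_eq_min]
  set p := φ u - u
  have hp : 0 ≤ p := sub_nonneg.2 (hφ.self_le hu)
  rcases le_total u (u * w' + p * (w' - χ w')) with h | h
  · rw [min_eq_left h]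
    exact min_le_left _ _
  rw [min_eq_right h]
  rcases hw'.lt_or_eq with hw'1 | rfl
  · apply min_le_of_right_le
    refine le_of_mul_le_mul_left ?_ (sub_pos.2 hw'1)
    linear_combination mul_le_mul_of_nonneg_left (hχ.sub_mul_one_sub_le hw hww' hw') hp +
      mul_nonneg (sub_nonneg.2 hww') (sub_nonneg.2 h)
  · apply min_le_of_left_le
    simp [hχ.2.2.2.1]

lemma maxminCopula_sub_le_sub {φ χ : ℝ → ℝ} (hφ : IsMarshallGen φ) (hχ : IsMaxminGen χ)
    {u u' w : ℝ} (hu : 0 ≤ u) (huu' : u ≤ u') (hu' : u' ≤ 1) (hw : w ∈ Icc (0:ℝ) 1) :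
    maxminCopula φ χ u' w - maxminCopula φ χ u w ≤ u' - u := by
  simp only [maxminCopula_eq_min]
  set k := w - χ w
  have hk : 0 ≤ k := sub_nonneg.2 (hχ.apply_le hw)
  rcases le_total u (u * w + (φ u - u) * k) with h | h
  · rw [min_eq_left h]
    linarith [min_le_left u' (u' * w + (φ u' - u') * k)]
  rw [min_eq_right h]
  rcases hu.lt_or_eq with hu0 | rfl
  · suffices (φ u' - u' - (φ u - u)) * k ≤ (u' - u) * (1 - w) by
      linarith [min_le_right u' (u' * w + (φ u' - u') * k)]
    refine le_of_mul_le_mul_left ?_ hu0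
    linear_combination mul_le_mul_of_nonneg_right (hφ.sub_self_mul_le hu huu' hu') hk +
      mul_le_mul_of_nonneg_left (sub_nonneg.2 h) (sub_nonneg.2 huu')
  · have hp : 0 ≤ φ 0 - 0 := sub_nonneg.2 (hφ.self_le ⟨le_rfl, zero_le_one⟩)
    linarith [min_le_left u' (u' * w + (φ u' - u') * k), mul_nonneg hp hk]

lemma sub_mul_sub_le_sub_mul_sub {u₁ u₂ w₁ w₂ p₁ p₂ k₁ k₂ : ℝ}
    (hu₁ : 0 ≤ u₁) (hu : u₁ ≤ u₂) (hw : w₁ ≤ w₂) (hp₁ : 0 ≤ p₁) (hk₁ : 0 ≤ k₁)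
    (hpu : p₂ * u₁ ≤ p₁ * u₂) (hkw : k₁ * (1 - w₂) ≤ k₂ * (1 - w₁))
    (hp : p₁ + u₁ ≤ p₂ + u₂) (hk : w₁ - k₁ ≤ w₂ - k₂) (h : p₁ * k₁ < u₁ * (1 - w₁)) :
    (p₂ - p₁) * (k₁ - k₂) ≤ (u₂ - u₁) * (w₂ - w₁) := by
  have hΔ : 0 ≤ (u₂ - u₁) * (w₂ - w₁) := mul_nonneg (sub_nonneg.2 hu) (sub_nonneg.2 hw)
  rcases le_total p₁ p₂ with hp₁₂ | hp₂₁ <;> rcases le_total k₂ k₁ with hk₂₁ | hk₁₂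
  · have hpos : 0 < u₁ * (1 - w₁) := (mul_nonneg hp₁ hk₁).trans_lt h
    have hpu' : (p₂ - p₁) * u₁ ≤ p₁ * (u₂ - u₁) := by linarith
    have hkw' : (k₁ - k₂) * (1 - w₁) ≤ k₁ * (w₂ - w₁) := by linarith
    refine le_of_mul_le_mul_right ?_ hpos
    calc (p₂ - p₁) * (k₁ - k₂) * (u₁ * (1 - w₁))
        = ((k₁ - k₂) * (1 - w₁)) * ((p₂ - p₁) * u₁) := by ring
      _ ≤ (k₁ * (w₂ - w₁)) * (p₁ * (u₂ - u₁)) :=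
          mul_le_mul hkw' hpu' (mul_nonneg (sub_nonneg.2 hp₁₂) hu₁)
            (mul_nonneg hk₁ (sub_nonneg.2 hw))
      _ = (p₁ * k₁) * ((u₂ - u₁) * (w₂ - w₁)) := by ring
      _ ≤ (u₁ * (1 - w₁)) * ((u₂ - u₁) * (w₂ - w₁)) := mul_le_mul_of_nonneg_right h.le hΔ
      _ = ((u₂ - u₁) * (w₂ - w₁)) * (u₁ * (1 - w₁)) := by ring
  · nlinarith [mul_nonneg (sub_nonneg.2 hp₁₂) (sub_nonneg.2 hk₁₂)]
  · nlinarith [mul_nonneg (sub_nonneg.2 hp₂₁) (sub_nonneg.2 hk₂₁)]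
  · calc (p₂ - p₁) * (k₁ - k₂) = (p₁ - p₂) * (k₂ - k₁) := by ring
      _ ≤ (u₂ - u₁) * (w₂ - w₁) :=
          mul_le_mul (by linarith) (by linarith) (sub_nonneg.2 hk₁₂) (sub_nonneg.2 hu)

lemma maxminCopula_volume_nonneg {φ χ : ℝ → ℝ} (hφ : IsMarshallGen φ) (hχ : IsMaxminGen χ)
    {u₁ u₂ w₁ w₂ : ℝ} (hu₁ : 0 ≤ u₁) (hu : u₁ ≤ u₂) (hu₂ : u₂ ≤ 1)
    (hw₁ : 0 ≤ w₁) (hw : w₁ ≤ w₂) (hw₂ : w₂ ≤ 1) :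
    0 ≤ maxminCopula φ χ u₂ w₂ - maxminCopula φ χ u₁ w₂ - maxminCopula φ χ u₂ w₁ +
      maxminCopula φ χ u₁ w₁ := by
  have hu₁' : u₁ ∈ Icc (0:ℝ) 1 := ⟨hu₁, hu.trans hu₂⟩
  have hu₂' : u₂ ∈ Icc (0:ℝ) 1 := ⟨hu₁.trans hu, hu₂⟩
  have hw₁' : w₁ ∈ Icc (0:ℝ) 1 := ⟨hw₁, hw.trans hw₂⟩
  have hw₂' : w₂ ∈ Icc (0:ℝ) 1 := ⟨hw₁.trans hw, hw₂⟩
  rcases le_or_gt u₁ (u₁ * w₁ + (φ u₁ - u₁) * (w₁ - χ w₁)) with h₁₁ | h₁₁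
  · -- then also `C u₁ w₂ = u₁`, by monotonicity in `w`
    have hC₁₁ : maxminCopula φ χ u₁ w₁ = u₁ := by rw [maxminCopula_eq_min, min_eq_left h₁₁]
    linarith [maxminCopula_le_left φ χ u₁ w₂, maxminCopula_mono_right hφ hχ hu₁' hw₁ hw hw₂,
      maxminCopula_mono_right hφ hχ hu₂' hw₁ hw hw₂]
  have hC₁₁ : maxminCopula φ χ u₁ w₁ = u₁ * w₁ + (φ u₁ - u₁) * (w₁ - χ w₁) := by
    rw [maxminCopula_eq_min, min_eq_right h₁₁.le]
  have hC₂₂ := maxminCopula_eq_min φ χ u₂ w₂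
  rcases le_total u₂ (u₂ * w₂ + (φ u₂ - u₂) * (w₂ - χ w₂)) with h₂₂ | h₂₂
  · rw [min_eq_left h₂₂] at hC₂₂
    linarith [maxminCopula_le_left φ χ u₁ w₂, maxminCopula_sub_le_sub hφ hχ hu₁ hu hu₂ hw₁']
  rw [min_eq_right h₂₂] at hC₂₂
  have hcross := sub_mul_sub_le_sub_mul_sub hu₁ hu hw (sub_nonneg.2 (hφ.self_le hu₁'))
    (sub_nonneg.2 (hχ.apply_le hw₁')) (hφ.sub_self_mul_le hu₁ hu hu₂)
    (hχ.sub_mul_one_sub_le hw₁ hw hw₂) (by linarith [hφ.1 hu₁' hu₂' hu])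
    (by linarith [hχ.1 hw₁' hw₂' hw]) (by linarith)
  linear_combination hcross + maxminCopula_le_right φ χ u₁ w₂ + maxminCopula_le_right φ χ u₂ w₁ -
    hC₂₂ - hC₁₁

lemma maxminCopula_isCopula {φ χ : ℝ → ℝ} (hφ : IsMarshallGen φ) (hχ : IsMaxminGen χ) :
    IsCopula (maxminCopula φ χ) := by
  refine ⟨fun u hu v hv => ⟨?_, ?_⟩, fun u hu => ?_, fun v _ => ?_, fun u _ => ?_,
    fun v hv => ?_, fun _ _ _ _ hu₁ hu hu₂ hw₁ hw hw₂ =>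
      maxminCopula_volume_nonneg hφ hχ hu₁ hu hu₂ hw₁ hw hw₂⟩
  · rw [maxminCopula_eq_min]
    exact le_min hu.1 (add_nonneg (mul_nonneg hu.1 hv.1)
      (mul_nonneg (sub_nonneg.2 (hφ.self_le hu)) (sub_nonneg.2 (hχ.apply_le hv))))
  · exact (maxminCopula_le_left φ χ u v).trans hu.2
  · simp [maxminCopula_eq_min, hχ.2.2.1, hu.1]
  · simp [maxminCopula_eq_min, hφ.2.2.1]
  · simp [maxminCopula_eq_min, hχ.2.2.2.1]
  · simp [maxminCopula_eq_min, hφ.2.2.2.1, hv.2]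

lemma maxminCopula_le_maxminCopula {φ₁ φ₂ χ₁ χ₂ : ℝ → ℝ} (hφ₂ : IsMarshallGen φ₂)
    (hχ₁ : IsMaxminGen χ₁) (hφ : ∀ u ∈ Icc (0:ℝ) 1, φ₁ u ≤ φ₂ u)
    (hχ : ∀ w ∈ Icc (0:ℝ) 1, χ₂ w ≤ χ₁ w) {u w : ℝ} (hu : u ∈ Icc (0:ℝ) 1)
    (hw : w ∈ Icc (0:ℝ) 1) :
    maxminCopula φ₁ χ₁ u w ≤ maxminCopula φ₂ χ₂ u w := by
  simp only [maxminCopula_eq_min]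
  have h := mul_le_mul (sub_le_sub_right (hφ u hu) u) (sub_le_sub_left (hχ w hw) w)
    (sub_nonneg.2 (hχ₁.apply_le hw)) (sub_nonneg.2 (hφ₂.self_le hu))
  exact min_le_min_left u (by linarith)

def copulaValuesBetween (Cl Ch : ℝ → ℝ → ℝ) (u w : ℝ) : Set ℝ :=
  {c : ℝ | ∃ C : ℝ → ℝ → ℝ, IsCopula C ∧
    (∀ u' ∈ Set.Icc (0:ℝ) 1, ∀ w' ∈ Set.Icc (0:ℝ) 1, Cl u' w' ≤ C u' w' ∧ C u' w' ≤ Ch u' w') ∧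
    c = C u w}

lemma isLeast_copulaValuesBetween {Cl Ch : ℝ → ℝ → ℝ} (hCl : IsCopula Cl)
    (hle : ∀ u ∈ Icc (0:ℝ) 1, ∀ w ∈ Icc (0:ℝ) 1, Cl u w ≤ Ch u w) {u w : ℝ}
    (hu : u ∈ Icc (0:ℝ) 1) (hw : w ∈ Icc (0:ℝ) 1) :
    IsLeast (copulaValuesBetween Cl Ch u w) (Cl u w) :=
  ⟨⟨Cl, hCl, fun u' hu' w' hw' => ⟨le_rfl, hle u' hu' w' hw'⟩, rfl⟩,
    by rintro _ ⟨C, -, hC, rfl⟩; exact (hC u hu w hw).1⟩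

lemma isGreatest_copulaValuesBetween {Cl Ch : ℝ → ℝ → ℝ} (hCh : IsCopula Ch)
    (hle : ∀ u ∈ Icc (0:ℝ) 1, ∀ w ∈ Icc (0:ℝ) 1, Cl u w ≤ Ch u w) {u w : ℝ}
    (hu : u ∈ Icc (0:ℝ) 1) (hw : w ∈ Icc (0:ℝ) 1) :
    IsGreatest (copulaValuesBetween Cl Ch u w) (Ch u w) :=
  ⟨⟨Ch, hCh, fun u' hu' w' hw' => ⟨hle u' hu' w' hw', le_rfl⟩, rfl⟩,
    by rintro _ ⟨C, -, hC, rfl⟩; exact (hC u hu w hw).2⟩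

/-- The imprecise maxmin copula (C^MM_{φ̲,χ̄}, C^MM_{φ̄,χ̲}) is coherent. -/
theorem imprecise_maxmin_coherent
    (φl φh χl χh : ℝ → ℝ)
    (hφl : IsMarshallGen φl) (hφh : IsMarshallGen φh)
    (hχl : IsMaxminGen χl) (hχh : IsMaxminGen χh)
    (hφ : ∀ u ∈ Set.Icc (0:ℝ) 1, φl u ≤ φh u)
    (hχ : ∀ w ∈ Set.Icc (0:ℝ) 1, χl w ≤ χh w) :
    ∀ u ∈ Set.Icc (0:ℝ) 1, ∀ w ∈ Set.Icc (0:ℝ) 1,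
      sInf {c : ℝ | ∃ C : ℝ → ℝ → ℝ, IsCopula C ∧
          (∀ u' ∈ Set.Icc (0:ℝ) 1, ∀ w' ∈ Set.Icc (0:ℝ) 1,
            maxminCopula φl χh u' w' ≤ C u' w' ∧
            C u' w' ≤ maxminCopula φh χl u' w') ∧
          c = C u w} = maxminCopula φl χh u w ∧
      sSup {c : ℝ | ∃ C : ℝ → ℝ → ℝ, IsCopula C ∧
          (∀ u' ∈ Set.Icc (0:ℝ) 1, ∀ w' ∈ Set.Icc (0:ℝ) 1,
            maxminCopula φl χh u' w' ≤ C u' w' ∧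
            C u' w' ≤ maxminCopula φh χl u' w') ∧
          c = C u w} = maxminCopula φh χl u w := by
  intro u hu w hw
  have hle : ∀ u ∈ Icc (0:ℝ) 1, ∀ w ∈ Icc (0:ℝ) 1,
      maxminCopula φl χh u w ≤ maxminCopula φh χl u w :=
    fun u hu w hw => maxminCopula_le_maxminCopula hφh hχh hφ hχ hu hw
  exact ⟨(isLeast_copulaValuesBetween (maxminCopula_isCopula hφl hχh) hle hu hw).csInf_eq,
    (isGreatest_copulaValuesBetween (maxminCopula_isCopula hφh hχl) hle hu hw).csSup_eq⟩
end

section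
/- Let F_X, F_Y, F_Z : ℝ → [0,1] be nondecreasing, set F = F_X·F_Z and G = F_Y·F_Z, and let φ, ψ : [0,1] → [0,1] be Marshall generators such that φ(F(x)) = F_X(x) for every x with F(x) > 0 and ψ(G(y)) = F_Y(y) for every y with G(y) > 0. Then for all x, y ∈ ℝ, C^M_{φ,ψ}(F(x), G(y)) = min{φ(F(x))·G(y), ψ(G(y))·F(x)} = F_X(x)·F_Y(y)·F_Z(min(x,y)). -/
lemma apply_mul_eq_of_pos {φ : ℝ → ℝ} (hφ0 : φ 0 = 0) {a c : ℝ} (ha : 0 ≤ a) (hc : 0 < c)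
    (h : 0 < a * c → φ (a * c) = a) : φ (a * c) = a := by
  rcases ha.eq_or_lt with rfl | ha
  · rw [zero_mul, hφ0]
  · exact h (mul_pos ha hc)

lemma min_mul_mul_eq_of_le {a b c d : ℝ} (ha : 0 ≤ a) (hb : 0 ≤ b) (hcd : c ≤ d) :
    min (a * (b * d)) (b * (a * c)) = a * b * c := by
  rw [min_eq_right (by nlinarith [mul_le_mul_of_nonneg_left hcd (mul_nonneg ha hb)])]
  ring

lemma marshall_min_eq_of_le {FX FY FZ φ ψ : ℝ → ℝ}
    (hFX : ∀ x, 0 ≤ FX x) (hFY : ∀ y, 0 ≤ FY y) (hFZ : ∀ z, 0 ≤ FZ z)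
    (hφ0 : φ 0 = 0) (hψ0 : ψ 0 = 0)
    (hφF : ∀ x : ℝ, 0 < FX x * FZ x → φ (FX x * FZ x) = FX x)
    (hψG : ∀ y : ℝ, 0 < FY y * FZ y → ψ (FY y * FZ y) = FY y)
    {x y : ℝ} (hxy : FZ x ≤ FZ y) :
    min (φ (FX x * FZ x) * (FY y * FZ y)) (ψ (FY y * FZ y) * (FX x * FZ x)) =
      FX x * FY y * FZ x := by
  rcases (hFZ x).eq_or_lt with hx | hx
  · simp [← hx, hφ0]
  · rw [apply_mul_eq_of_pos hφ0 (hFX x) hx (hφF x),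
      apply_mul_eq_of_pos hψ0 (hFY y) (hx.trans_le hxy) (hψG y)]
    exact min_mul_mul_eq_of_le (hFX x) (hFY y) hxy

theorem marshall_copula_shock_representation_general
    (FX FY FZ : ℝ → ℝ)
    (hFZmono : Monotone FZ)
    (hFX01 : ∀ x : ℝ, FX x ∈ Set.Icc (0:ℝ) 1)
    (hFY01 : ∀ y : ℝ, FY y ∈ Set.Icc (0:ℝ) 1)
    (hFZ01 : ∀ x : ℝ, FZ x ∈ Set.Icc (0:ℝ) 1)
    (φ ψ : ℝ → ℝ) (hφ : IsMarshallGen φ) (hψ : IsMarshallGen ψ)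
    (hφF : ∀ x : ℝ, 0 < FX x * FZ x → φ (FX x * FZ x) = FX x)
    (hψG : ∀ y : ℝ, 0 < FY y * FZ y → ψ (FY y * FZ y) = FY y) :
    ∀ x y : ℝ,
      min (φ (FX x * FZ x) * (FY y * FZ y)) (ψ (FY y * FZ y) * (FX x * FZ x)) =
        FX x * FY y * FZ (min x y) := by
  intro x y
  have hFX x := (hFX01 x).1
  have hFY y := (hFY01 y).1
  have hFZ z := (hFZ01 z).1
  rcases le_total x y with hxy | hyx
  · rw [min_eq_left hxy]
    exact marshall_min_eq_of_le hFX hFY hFZ hφ.2.2.1 hψ.2.2.1 hφF hψG (hFZmono hxy)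
  · rw [min_eq_right hyx, min_comm, mul_comm (FX x) (FY y)]
    exact marshall_min_eq_of_le hFY hFX hFZ hψ.2.2.1 hφ.2.2.1 hψG hφF (hFZmono hyx)

/-- With F = F_X·F_Z, G = F_Y·F_Z and Marshall generators φ, ψ associated
to them, the Marshall copula applied to (F(x), G(y)) equals F_X(x)·F_Y(y)·F_Z(min(x,y)). -/
theorem marshall_copula_shock_representation
    (FX FY FZ : ℝ → ℝ)
    (hFXmono : Monotone FX) (hFYmono : Monotone FY) (hFZmono : Monotone FZ)
    (hFX01 : ∀ x : ℝ, FX x ∈ Set.Icc (0:ℝ) 1)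
    (hFY01 : ∀ y : ℝ, FY y ∈ Set.Icc (0:ℝ) 1)
    (hFZ01 : ∀ x : ℝ, FZ x ∈ Set.Icc (0:ℝ) 1)
    (φ ψ : ℝ → ℝ) (hφ : IsMarshallGen φ) (hψ : IsMarshallGen ψ)
    (hφF : ∀ x : ℝ, 0 < FX x * FZ x → φ (FX x * FZ x) = FX x)
    (hψG : ∀ y : ℝ, 0 < FY y * FZ y → ψ (FY y * FZ y) = FY y) :
    ∀ x y : ℝ,
      min (φ (FX x * FZ x) * (FY y * FZ y)) (ψ (FY y * FZ y) * (FX x * FZ x)) =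
        FX x * FY y * FZ (min x y) :=
  marshall_copula_shock_representation_general FX FY FZ hFZmono hFX01 hFY01 hFZ01 φ ψ hφ hψ hφF hψG
end

section
/- Let (Ω, 𝒜, P) be a probability space and let X, Y, Z be mutually independent real-valued random variables on Ω. Then for all x, y ∈ ℝ: if x ≤ y, then P({ω : max(X(ω), Z(ω)) ≤ x and min(Y(ω), Z(ω)) ≤ y}) = P({X ≤ x}) · P({Z ≤ x}); and if y ≤ x, then P({ω : max(X(ω), Z(ω)) ≤ x and min(Y(ω), Z(ω)) ≤ y}) = P({X ≤ x}) · (P({Z ≤ y}) + P({Y ≤ y})·(P({Z ≤ x}) − P({Z ≤ y}))). -/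
/-!
The event factors as `{X ≤ x} ∩ {Z ≤ x ∧ min Y Z ≤ y}`, and the second factor is an event of
`(Y, Z)`, which is independent of `X`. When `x ≤ y` it is just `{Z ≤ x}`; when `y ≤ x` it splits
disjointly according to whether `Z ≤ y`, the remaining part `{Y ≤ y} ∩ {y < Z ≤ x}` factoring by
independence of `Y` and `Z`.
-/

open MeasureTheory ProbabilityTheory Set

lemma setOf_le_and_min_le_eq_union {Ω α : Type*} [LinearOrder α] {Y Z : Ω → α} {x y : α}
    (hyx : y ≤ x) :
    {ω | Z ω ≤ x ∧ min (Y ω) (Z ω) ≤ y} =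
      Z ⁻¹' Iic y ∪ (Y ⁻¹' Iic y ∩ Z ⁻¹' Ioc y x) := by
  ext ω
  simp only [mem_ofPred_eq, min_le_iff, mem_union, mem_inter_iff, mem_preimage, mem_Iic, mem_Ioc]
  by_cases hzy : Z ω ≤ y
  · simp [hzy, hzy.trans hyx]
  · simp only [hzy, or_false, false_or, not_le.mp hzy, true_and]
    tauto

lemma measure_le_and_min_le_of_indepFun {Ω α : Type*} [MeasurableSpace Ω] {μ : Measure Ω}
    [IsFiniteMeasure μ] [LinearOrder α] [TopologicalSpace α] [OrderClosedTopology α]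
    [MeasurableSpace α] [OpensMeasurableSpace α] {Y Z : Ω → α} (hYZ : IndepFun Y Z μ)
    (hZ : Measurable Z) {x y : α} (hyx : y ≤ x) :
    μ {ω | Z ω ≤ x ∧ min (Y ω) (Z ω) ≤ y} =
      μ {ω | Z ω ≤ y} + μ {ω | Y ω ≤ y} * (μ {ω | Z ω ≤ x} - μ {ω | Z ω ≤ y}) := by
  have hdisj : Disjoint (Z ⁻¹' Iic y) (Y ⁻¹' Iic y ∩ Z ⁻¹' Ioc y x) :=
    disjoint_left.mpr fun ω hle hmem => (not_le.mpr hmem.2.1) hle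
  have hslab : μ (Z ⁻¹' Ioc y x) = μ {ω | Z ω ≤ x} - μ {ω | Z ω ≤ y} := by
    have hIoc : Ioc y x = Iic x \ Iic y := by
      ext
      simp [and_comm]
    rw [hIoc, preimage_sdiff, measure_sdiff (preimage_mono (Iic_subset_Iic.mpr hyx))
      (hZ measurableSet_Iic).nullMeasurableSet (measure_ne_top μ _)]
    rfl
  rw [setOf_le_and_min_le_eq_union hyx, measure_union' hdisj (hZ measurableSet_Iic),
    hYZ.measure_inter_preimage_eq_mul _ _ measurableSet_Iic measurableSet_Ioc, hslab]
  rfl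

/-- For mutually independent X, Y, Z, the joint distribution function of
(max{X,Z}, min{Y,Z}) at (x,y) equals P(X≤x)·P(Z≤x) if x ≤ y, and
P(X≤x)·(P(Z≤y) + P(Y≤y)·(P(Z≤x) − P(Z≤y))) if y ≤ x. -/
theorem joint_cdf_max_min_of_indep
    {Ω : Type*} [MeasurableSpace Ω] (P : Measure Ω) [IsProbabilityMeasure P]
    (X Y Z : Ω → ℝ) (hX : Measurable X) (hY : Measurable Y) (hZ : Measurable Z)
    (hindep : iIndepFun ![X, Y, Z] P) :
    ∀ x y : ℝ,
      (x ≤ y →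
        P {ω | max (X ω) (Z ω) ≤ x ∧ min (Y ω) (Z ω) ≤ y} =
          P {ω | X ω ≤ x} * P {ω | Z ω ≤ x}) ∧
      (y ≤ x →
        P {ω | max (X ω) (Z ω) ≤ x ∧ min (Y ω) (Z ω) ≤ y} =
          P {ω | X ω ≤ x} *
            (P {ω | Z ω ≤ y} + P {ω | Y ω ≤ y} * (P {ω | Z ω ≤ x} - P {ω | Z ω ≤ y}))) := by
  intro x y
  have hYZ_X : IndepFun (fun ω => (Y ω, Z ω)) X P :=
    hindep.indepFun_prodMk (fun i => by fin_cases i <;> assumption) 1 2 0 (by decide) (by decide)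
  have hYZ : IndepFun Y Z P := hindep.indepFun (i := 1) (j := 2) (by decide)
  have hfactor : P {ω | max (X ω) (Z ω) ≤ x ∧ min (Y ω) (Z ω) ≤ y} =
      P {ω | X ω ≤ x} * P {ω | Z ω ≤ x ∧ min (Y ω) (Z ω) ≤ y} := by
    have hB : MeasurableSet {p : ℝ × ℝ | p.2 ≤ x ∧ min p.1 p.2 ≤ y} := by measurability
    calc P {ω | max (X ω) (Z ω) ≤ x ∧ min (Y ω) (Z ω) ≤ y}
        = P (X ⁻¹' Iic x ∩ (fun ω => (Y ω, Z ω)) ⁻¹' {p | p.2 ≤ x ∧ min p.1 p.2 ≤ y}) := by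
          congr 1
          ext ω
          simp [and_assoc]
      _ = _ := hYZ_X.symm.measure_inter_preimage_eq_mul _ _ measurableSet_Iic hB
  rw [hfactor]
  refine ⟨fun hxy => ?_, fun hyx => by rw [measure_le_and_min_le_of_indepFun hYZ hZ hyx]⟩
  congr 2
  ext ω
  simp only [mem_ofPred_eq, and_iff_left_iff_imp]
  exact fun hzx => min_le_of_right_le (hzx.trans hxy)
end

section
/- Let F_X, F_Y, F_Z : ℝ → [0,1] be nondecreasing, set F = F_X·F_Z and K = F_Y + F_Z − F_Y·F_Z, and let φ be a Marshall generator and χ a maxmin second generator such that φ(F(x)) = F_X(x) for every x with F(x) > 0 and χ(K(y)) = F_Y(y) for every y with K(y) < 1. Then for all x, y ∈ ℝ, C^MM_{φ,χ}(F(x), K(y)) equals F_X(x)·F_Z(x) when x ≤ y, and equals F_X(x)·(F_Z(y) + F_Y(y)·(F_Z(x) − F_Z(y))) when y ≤ x. -/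
/-!
Write a = F_X(x), c = F_Z(x), b = F_Y(y), d = F_Z(y), so that 1 − K(y) = (1 − b)(1 − d).
Away from the degenerate cases F(x) = 0 and K(y) = 1, the generator identities give
φ(F(x)) − F(x) = a(1 − c) and K(y) − χ(K(y)) = d(1 − b); both arguments of the minimum then
carry the factor a(1 − b), and what remains compares c(1 − d) with d(1 − c), that is c with d.
Hence C = a(min(c, d) + b(c − min(c, d))) in every case, and monotonicity of F_Z decides which
of c, d is the minimum.
-/

theorem maxminCopula_zero_left {φ : ℝ → ℝ} (χ : ℝ → ℝ) (hφ0 : φ 0 = 0) (w : ℝ) :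
    maxminCopula φ χ 0 w = 0 := by
  simp [maxminCopula, hφ0]

theorem maxminCopula_one_right (φ : ℝ → ℝ) {χ : ℝ → ℝ} (hχ1 : χ 1 = 1) (u : ℝ) :
    maxminCopula φ χ u 1 = u := by
  simp [maxminCopula, hχ1]

theorem maxminCopula_shock_of_generator_eq {φ χ : ℝ → ℝ} {a b c d : ℝ}
    (ha : 0 ≤ a) (hb : b ≤ 1)
    (hφ : φ (a * c) = a) (hχ : χ (b + d - b * d) = b) :
    maxminCopula φ χ (a * c) (b + d - b * d) = a * (min c d + b * (c - min c d)) := by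
  have hmin : min (a * c * (1 - (b + d - b * d))) ((a - a * c) * (b + d - b * d - b))
      = a * (1 - b) * (min c d - c * d) := by
    calc _ = min (a * (1 - b) * (c - c * d)) (a * (1 - b) * (d - c * d)) := by ring_nf
      _ = a * (1 - b) * (min c d - c * d) := by
        rw [← mul_min_of_nonneg _ _ (mul_nonneg ha (sub_nonneg.2 hb)), min_sub_sub_right]
  simp only [maxminCopula, hφ, hχ, hmin]
  ring

theorem maxminCopula_shock {φ χ : ℝ → ℝ} (hφ0 : φ 0 = 0) (hχ1 : χ 1 = 1) {a b c d : ℝ}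
    (ha : 0 ≤ a) (hb : b ≤ 1) (hc : c ∈ Set.Icc (0 : ℝ) 1) (hd : d ∈ Set.Icc (0 : ℝ) 1)
    (hφ : 0 < a * c → φ (a * c) = a) (hχ : b + d - b * d < 1 → χ (b + d - b * d) = b) :
    maxminCopula φ χ (a * c) (b + d - b * d) = a * (min c d + b * (c - min c d)) := by
  obtain ⟨hc0, hc1⟩ := hc
  obtain ⟨hd0, hd1⟩ := hd
  by_cases hu : 0 < a * c
  · by_cases hw : b + d - b * d < 1
    · exact maxminCopula_shock_of_generator_eq ha hb (hφ hu) (hχ hw)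
    · have hbd : (1 - b) * (1 - d) = 0 :=
        le_antisymm (by linarith) (mul_nonneg (sub_nonneg.2 hb) (sub_nonneg.2 hd1))
      have hw1 : b + d - b * d = 1 := by linarith
      rw [hw1, maxminCopula_one_right φ hχ1]
      rcases mul_eq_zero.1 hbd with hb_eq | hd_eq
      · rw [show b = 1 by linarith]; ring
      · rw [show d = 1 by linarith, min_eq_left hc1]; ring
  · have hac : a * c = 0 := le_antisymm (not_lt.1 hu) (mul_nonneg ha hc0)
    rw [hac, maxminCopula_zero_left χ hφ0]
    rcases mul_eq_zero.1 hac with ha0 | hc0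
    · rw [ha0, zero_mul]
    · rw [hc0, min_eq_left hd0]; ring

theorem maxmin_copula_shock_representation_general
    (FX FY FZ : ℝ → ℝ)
    (hFZmono : Monotone FZ)
    (hFX01 : ∀ x : ℝ, FX x ∈ Set.Icc (0:ℝ) 1)
    (hFY01 : ∀ y : ℝ, FY y ∈ Set.Icc (0:ℝ) 1)
    (hFZ01 : ∀ x : ℝ, FZ x ∈ Set.Icc (0:ℝ) 1)
    (φ χ : ℝ → ℝ) (hφ : IsMarshallGen φ) (hχ : IsMaxminGen χ)
    (hφF : ∀ x : ℝ, 0 < FX x * FZ x → φ (FX x * FZ x) = FX x)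
    (hχK : ∀ y : ℝ, FY y + FZ y - FY y * FZ y < 1 →
      χ (FY y + FZ y - FY y * FZ y) = FY y) :
    ∀ x y : ℝ,
      (x ≤ y →
        maxminCopula φ χ (FX x * FZ x) (FY y + FZ y - FY y * FZ y) = FX x * FZ x) ∧
      (y ≤ x →
        maxminCopula φ χ (FX x * FZ x) (FY y + FZ y - FY y * FZ y) =
          FX x * (FZ y + FY y * (FZ x - FZ y))) := by
  obtain ⟨-, -, hφ0, -⟩ := hφ
  obtain ⟨-, -, -, hχ1, -⟩ := hχ
  intro x y
  have hC := maxminCopula_shock hφ0 hχ1 (hFX01 x).1 (hFY01 y).2 (hFZ01 x) (hFZ01 y)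
    (hφF x) (hχK y)
  refine ⟨fun hxy => ?_, fun hyx => ?_⟩
  · rw [hC, min_eq_left (hFZmono hxy)]; ring
  · rw [hC, min_eq_right (hFZmono hyx)]

/-- With F = F_X·F_Z and K = F_Y + F_Z − F_Y·F_Z and generators φ, χ
associated to them, C^MM_{φ,χ}(F(x), K(y)) equals F_X(x)·F_Z(x) when x ≤ y and
F_X(x)·(F_Z(y) + F_Y(y)·(F_Z(x) − F_Z(y))) when y ≤ x. -/
theorem maxmin_copula_shock_representation
    (FX FY FZ : ℝ → ℝ)
    (hFXmono : Monotone FX) (hFYmono : Monotone FY) (hFZmono : Monotone FZ)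
    (hFX01 : ∀ x : ℝ, FX x ∈ Set.Icc (0:ℝ) 1)
    (hFY01 : ∀ y : ℝ, FY y ∈ Set.Icc (0:ℝ) 1)
    (hFZ01 : ∀ x : ℝ, FZ x ∈ Set.Icc (0:ℝ) 1)
    (φ χ : ℝ → ℝ) (hφ : IsMarshallGen φ) (hχ : IsMaxminGen χ)
    (hφF : ∀ x : ℝ, 0 < FX x * FZ x → φ (FX x * FZ x) = FX x)
    (hχK : ∀ y : ℝ, FY y + FZ y - FY y * FZ y < 1 →
      χ (FY y + FZ y - FY y * FZ y) = FY y) :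
    ∀ x y : ℝ,
      (x ≤ y →
        maxminCopula φ χ (FX x * FZ x) (FY y + FZ y - FY y * FZ y) = FX x * FZ x) ∧
      (y ≤ x →
        maxminCopula φ χ (FX x * FZ x) (FY y + FZ y - FY y * FZ y) =
          FX x * (FZ y + FY y * (FZ x - FZ y))) :=
  maxmin_copula_shock_representation_general FX FY FZ hFZmono hFX01 hFY01 hFZ01 φ χ hφ hχ hφF hχK
end
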